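/- arXiv:2504.16425 — 5 statements merged into one kernel-verified Lean document; each statement's English description precedes it below -/
import Mathlib

section
/- Let k > 0 and define h₂(z) := −15/(2k²) + cos(2z)/(2k²). Then h₂ is an even 2π-periodic function satisfying k²·( h₂⁗(z) − h₂(z) ) = 15 cos²(z) for all z ∈ ℝ. This is the unique correction at order a² in the small-amplitude expansion of the CDG–SK periodic traveling wave, and the corresponding speed correction at order a vanishes (c₁ = 0). -/
/-!
Since `cos 2z = 2 cos² z - 1`, `h₂ = (cos² z - 8) / k²` and the equation for `h₂` is a direct
computation. For uniqueness, `g = h - h₂` satisfies `k⁴ (g⁗ - g) = c₁ cos`. Integrating against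
`cos` and moving the four derivatives onto `cos` (the boundary terms cancel by periodicity, and
`cos⁗ = cos`) gives `c₁ π = 0`, so `g⁗ = g`. Then `u = g'' + g` is a periodic solution of `u'' = u`,
hence `0` (`u' ± u` solve `v' = ±v`, whose solutions `C e^{±z}` are periodic only for `C = 0`);
so `g'' = -g`, evenness makes `g = g(0) cos`, and orthogonality to `cos` forces `g(0) = 0`.
-/

open Real Function intervalIntegral

/-- The order-`a²` correction in the small-amplitude expansion of the CDG–SK periodic wave:
`h₂(z) = −15/(2k²) + cos(2z)/(2k²)`. -/
noncomputable def cdgskH2 (k : ℝ) : ℝ → ℝ := fun z =>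
  -(15 / (2 * k ^ 2)) + Real.cos (2 * z) / (2 * k ^ 2)

section Periodic

variable {𝕜 F : Type*} [NontriviallyNormedField 𝕜] [NormedAddCommGroup F] [NormedSpace 𝕜 F]
  {f : 𝕜 → F} {T : 𝕜}

theorem Function.Periodic.deriv (hf : Periodic f T) : Periodic (_root_.deriv f) T := fun x => by
  rw [← deriv_comp_add_const, show (fun y => f (y + T)) = f from funext hf]

theorem Function.Periodic.iteratedDeriv (hf : Periodic f T) (n : ℕ) :
    Periodic (_root_.iteratedDeriv n f) T := by
  induction n with
  | zero => simpa
  | succ n ih => simpa only [iteratedDeriv_succ] using ih.deriv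

end Periodic

theorem Function.Even.deriv_zero {f : ℝ → ℝ} (hf : f.Even) : deriv f 0 = 0 := by
  have h := deriv_comp_neg f 0
  rw [show (fun x => f (-x)) = f from funext hf, neg_zero] at h
  linarith

theorem integral_mul_deriv_of_periodic {u v : ℝ → ℝ} {T : ℝ} (hu : Differentiable ℝ u)
    (hu' : Continuous (deriv u)) (hv : Differentiable ℝ v) (hv' : Continuous (deriv v))
    (huT : Periodic u T) (hvT : Periodic v T) :
    ∫ x in 0..T, u x * deriv v x = -∫ x in 0..T, deriv u x * v x := by
  rw [integral_mul_deriv_eq_deriv_mul (fun x _ => (hu x).hasDerivAt) (fun x _ => (hv x).hasDerivAt)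
    (hu'.intervalIntegrable 0 T) (hv'.intervalIntegrable 0 T), show u T = u 0 by simpa using huT 0,
    show v T = v 0 by simpa using hvT 0, sub_self, zero_sub]

theorem integral_mul_iteratedDeriv_of_periodic {f g : ℝ → ℝ} {T : ℝ} {n : ℕ}
    (hf : ContDiff ℝ n f) (hg : ContDiff ℝ n g) (hfT : Periodic f T) (hgT : Periodic g T) :
    ∫ x in 0..T, f x * iteratedDeriv n g x = (-1) ^ n * ∫ x in 0..T, iteratedDeriv n f x * g x := by
  induction n generalizing g with
  | zero => simp
  | succ n ih =>
    push_cast at hf hg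
    calc ∫ x in 0..T, f x * iteratedDeriv (n + 1) g x
        = ∫ x in 0..T, f x * iteratedDeriv n (deriv g) x := by rw [iteratedDeriv_succ']
      _ = (-1) ^ n * ∫ x in 0..T, iteratedDeriv n f x * deriv g x :=
          ih (hf.of_le le_self_add) hg.deriv' hgT.deriv
      _ = (-1) ^ (n + 1) * ∫ x in 0..T, iteratedDeriv (n + 1) f x * g x := by
          rw [integral_mul_deriv_of_periodic (hf.differentiable_iteratedDeriv' n)
            (by simpa only [iteratedDeriv_succ] using hf.continuous_iteratedDeriv' (n + 1))
            (hg.differentiable (by simp)) (hg.continuous_deriv le_add_self)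
            (hfT.iteratedDeriv n) hgT, iteratedDeriv_succ]
          ring

theorem ContDiff.hasDerivAt_iteratedDeriv {f : ℝ → ℝ} {N : WithTop ℕ∞} {n : ℕ}
    (hf : ContDiff ℝ N f) (hn : n < N) (x : ℝ) :
    HasDerivAt (iteratedDeriv n f) (iteratedDeriv (n + 1) f x) x := by
  rw [iteratedDeriv_succ]
  exact (hf.differentiable_iteratedDeriv n hn x).hasDerivAt

theorem eq_zero_of_hasDerivAt_const_mul_of_periodic {f : ℝ → ℝ} {a T : ℝ} (ha : a ≠ 0)
    (hT : T ≠ 0) (hf : ∀ x, HasDerivAt f (a * f x) x) (hfT : Periodic f T) : f = 0 := by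
  have hF : ∀ x, HasDerivAt (fun x => f x * exp (-a * x)) 0 x := fun x =>
    ((hf x).fun_mul ((hasDerivAt_id' x).const_mul (-a)).exp).congr_deriv (by ring)
  have hconst : ∀ x, f x * exp (-a * x) = f 0 := fun x => by
    simpa using is_const_of_deriv_eq_zero (fun x => (hF x).differentiableAt)
      (fun x => (hF x).deriv) x 0
  have h0 : f 0 = 0 := by
    have hexp : exp (-a * T) ≠ 1 := by
      rw [Ne, exp_eq_one_iff]
      exact mul_ne_zero (neg_ne_zero.2 ha) hT
    have h := hconst T
    rw [show f T = f 0 by simpa using hfT 0] at h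
    by_contra hne
    exact hexp ((mul_eq_left₀ hne).1 h)
  funext x
  simpa [h0, (exp_pos _).ne'] using hconst x

theorem eq_zero_of_hasDerivAt_self_of_periodic {u u' : ℝ → ℝ} {T : ℝ} (hT : T ≠ 0)
    (hu : ∀ x, HasDerivAt u (u' x) x) (hu' : ∀ x, HasDerivAt u' (u x) x)
    (huT : Periodic u T) : u = 0 := by
  have hu'T : Periodic u' T := fun x => by
    rw [← (hu _).deriv, ← (hu x).deriv]
    exact huT.deriv x
  have hplus := eq_zero_of_hasDerivAt_const_mul_of_periodic one_ne_zero hT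
    (fun x => ((hu' x).add (hu x)).congr_deriv (by rw [Pi.add_apply]; ring)) (hu'T.add huT)
  have hminus := eq_zero_of_hasDerivAt_const_mul_of_periodic (neg_ne_zero.2 one_ne_zero) hT
    (fun x => ((hu' x).sub (hu x)).congr_deriv (by rw [Pi.sub_apply]; ring)) (hu'T.sub huT)
  funext x
  have h₁ := congrFun hplus x
  have h₂ := congrFun hminus x
  simp only [Pi.add_apply, Pi.sub_apply, Pi.zero_apply] at h₁ h₂ ⊢
  linarith

theorem eq_zero_of_hasDerivAt_neg {f f' : ℝ → ℝ} (hf : ∀ x, HasDerivAt f (f' x) x)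
    (hf' : ∀ x, HasDerivAt f' (-f x) x) (h0 : f 0 = 0) (h0' : f' 0 = 0) : f = 0 := by
  have hE : ∀ x, HasDerivAt (fun x => f x ^ 2 + f' x ^ 2) 0 x := fun x =>
    (((hf x).pow 2).add ((hf' x).pow 2)).congr_deriv (by ring)
  funext x
  have h := is_const_of_deriv_eq_zero (fun x => (hE x).differentiableAt) (fun x => (hE x).deriv) x 0
  simp only [h0, h0'] at h
  exact pow_eq_zero_iff two_ne_zero |>.1 (by nlinarith [sq_nonneg (f x), sq_nonneg (f' x)])

theorem iteratedDeriv_two_eq_neg_of_iteratedDeriv_four_eq_self {g : ℝ → ℝ} {T : ℝ} (hT : T ≠ 0)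
    (hg : ContDiff ℝ 4 g) (hgT : Periodic g T) (h4 : ∀ x, iteratedDeriv 4 g x = g x) (x : ℝ) :
    iteratedDeriv 2 g x = -g x := by
  have d : ∀ n < 4, ∀ x, HasDerivAt (iteratedDeriv n g) (iteratedDeriv (n + 1) g x) x :=
    fun n hn => hg.hasDerivAt_iteratedDeriv (by exact_mod_cast hn)
  have d₀ : ∀ x, HasDerivAt g (iteratedDeriv 1 g x) x := by simpa using d 0 (by norm_num)
  have hu := eq_zero_of_hasDerivAt_self_of_periodic hT
    (u := fun x => iteratedDeriv 2 g x + g x)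
    (u' := fun x => iteratedDeriv 3 g x + iteratedDeriv 1 g x)
    (fun x => (d 2 (by norm_num) x).add (d₀ x))
    (fun x => ((d 3 (by norm_num) x).add (d 1 (by norm_num) x)).congr_deriv (by rw [h4]; ring))
    ((hgT.iteratedDeriv 2).add hgT)
  have := congrFun hu x
  simp only [Pi.zero_apply] at this
  linarith

theorem eq_mul_cos_of_iteratedDeriv_two_eq_neg {g : ℝ → ℝ} (hg : ContDiff ℝ 2 g) (heven : g.Even)
    (h2 : ∀ x, iteratedDeriv 2 g x = -g x) (x : ℝ) : g x = g 0 * cos x := by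
  have h := eq_zero_of_hasDerivAt_neg (f := fun x => g x - g 0 * cos x)
    (f' := fun x => deriv g x + g 0 * sin x)
    (fun x => ((hg.differentiable two_ne_zero x).hasDerivAt.sub
      ((hasDerivAt_cos x).const_mul _)).congr_deriv (by ring))
    (fun x => by
      have := (hg.hasDerivAt_iteratedDeriv (n := 1) (by norm_num) x).add
        ((hasDerivAt_sin x).const_mul (g 0))
      rw [iteratedDeriv_one, h2] at this
      exact this.congr_deriv (by ring))
    (by simp) (by simp [heven.deriv_zero])
  have := congrFun h x
  simp only [Pi.zero_apply] at this
  linarith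

theorem eq_zero_of_iteratedDeriv_four_eq_self {g : ℝ → ℝ} (hg : ContDiff ℝ 4 g) (heven : g.Even)
    (hgT : Periodic g (2 * π)) (horth : ∫ x in 0..2 * π, g x * cos x = 0)
    (h4 : ∀ x, iteratedDeriv 4 g x = g x) : g = 0 := by
  have hcos := eq_mul_cos_of_iteratedDeriv_two_eq_neg (hg.of_le (by norm_num)) heven
    (iteratedDeriv_two_eq_neg_of_iteratedDeriv_four_eq_self two_pi_pos.ne' hg hgT h4)
  have hg0 : g 0 = 0 := by
    rw [integral_congr fun x _ => show g x * cos x = g 0 * cos x ^ 2 by rw [hcos x]; ring,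
      integral_const_mul, integral_cos_sq] at horth
    simpa using horth
  funext x
  rw [hcos x, hg0, zero_mul, Pi.zero_apply]

theorem eq_zero_of_iteratedDeriv_four_sub_self_eq_mul_cos {g : ℝ → ℝ} {c : ℝ}
    (hg : ContDiff ℝ 4 g) (hgT : Periodic g (2 * π))
    (h : ∀ x, iteratedDeriv 4 g x - g x = c * cos x) : c = 0 := by
  have hibp : ∫ x in 0..2 * π, cos x * iteratedDeriv 4 g x = ∫ x in 0..2 * π, cos x * g x := by
    rw [integral_mul_iteratedDeriv_of_periodic contDiff_cos hg cos_periodic hgT,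
      show iteratedDeriv 4 cos = iteratedDeriv (2 * 2) cos from rfl, iteratedDeriv_even_cos]
    norm_num
  have hint : c * π = 0 := calc
    c * π = ∫ x in 0..2 * π, cos x * (iteratedDeriv 4 g x - g x) := by
      simp_rw [h, ← mul_assoc, mul_comm (cos _) c, mul_assoc, ← sq]
      simp [integral_cos_sq]
    _ = (∫ x in 0..2 * π, cos x * iteratedDeriv 4 g x) - ∫ x in 0..2 * π, cos x * g x := by
      simp_rw [mul_sub]
      exact integral_sub
        ((continuous_cos.mul (hg.continuous_iteratedDeriv' 4)).intervalIntegrable _ _)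
        ((continuous_cos.mul hg.continuous).intervalIntegrable _ _)
    _ = 0 := by rw [hibp, sub_self]
  exact (mul_eq_zero.1 hint).resolve_right pi_ne_zero

theorem cdgskH2_eq (k : ℝ) : cdgskH2 k = fun z => (cos z ^ 2 - 8) / k ^ 2 := by
  funext z
  rw [cdgskH2, cos_two_mul]
  ring

theorem cdgskH2_even (k : ℝ) : (cdgskH2 k).Even := fun z => by
  simp [cdgskH2_eq]

theorem cdgskH2_periodic (k : ℝ) : Periodic (cdgskH2 k) (2 * π) := fun z => by
  simp [cdgskH2_eq]

theorem contDiff_cdgskH2 (k : ℝ) {n : WithTop ℕ∞} : ContDiff ℝ n (cdgskH2 k) := by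
  rw [cdgskH2_eq]
  fun_prop

theorem iteratedDeriv_four_cdgskH2 (k z : ℝ) :
    iteratedDeriv 4 (cdgskH2 k) z = 8 * cos (2 * z) / k ^ 2 := by
  rw [show cdgskH2 k = fun z => -(15 / (2 * k ^ 2)) + cos (2 * z) / (2 * k ^ 2) from rfl,
    iteratedDeriv_const_add (by norm_num), iteratedDeriv_div_const,
    iteratedDeriv_comp_const_mul contDiff_cos, show 4 = 2 * 2 from rfl, iteratedDeriv_even_cos]
  simp only [Nat.reduceMul, even_two, Even.neg_pow, one_pow, Pi.mul_apply, Pi.one_apply, one_mul]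
  ring

theorem cdgskH2_ode {k : ℝ} (hk : k ≠ 0) (z : ℝ) :
    k ^ 2 * (iteratedDeriv 4 (cdgskH2 k) z - cdgskH2 k z) = 15 * cos z ^ 2 := by
  rw [iteratedDeriv_four_cdgskH2, cdgskH2_eq, cos_two_mul]
  field_simp
  ring

theorem integral_cdgskH2_mul_cos (k : ℝ) : ∫ z in 0..2 * π, cdgskH2 k z * cos z = 0 := by
  simp_rw [cdgskH2_eq, div_mul_eq_mul_div, sub_mul, ← pow_succ]
  rw [integral_div, integral_sub ((by fun_prop : Continuous _).intervalIntegrable _ _)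
    ((by fun_prop : Continuous _).intervalIntegrable _ _)]
  simp [integral_cos_pow_three]

/-- **The second-order correction of the CDG–SK expansion.**
For `k > 0`, `h₂(z) = −15/(2k²) + cos(2z)/(2k²)` is even, `2π`-periodic, and satisfies
`k² (h₂⁗ − h₂) = 15 cos² z`.  Moreover it is the unique correction at order `a²`:
if `c₁ ∈ ℝ` and `h` is a `C⁴`, even, `2π`-periodic function orthogonal to `cos`
satisfying the `O(a²)` equation `−k⁴(h − h⁗) − c₁ cos z − 15 k² cos² z = 0`,
then `c₁ = 0` and `h = h₂`. -/
theorem cdgsk_second_order_correction (k : ℝ) (hk : 0 < k) :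
    ((∀ z : ℝ, cdgskH2 k (-z) = cdgskH2 k z) ∧
      Function.Periodic (cdgskH2 k) (2 * Real.pi) ∧
      (∀ z : ℝ, k ^ 2 * (iteratedDeriv 4 (cdgskH2 k) z - cdgskH2 k z)
          = 15 * (Real.cos z) ^ 2)) ∧
    (∀ (c₁ : ℝ) (h : ℝ → ℝ), ContDiff ℝ 4 h →
      (∀ z : ℝ, h (-z) = h z) →
      Function.Periodic h (2 * Real.pi) →
      (∫ z in (0 : ℝ)..(2 * Real.pi), h z * Real.cos z) = 0 →
      (∀ z : ℝ, -(k ^ 4) * (h z - iteratedDeriv 4 h z) - c₁ * Real.cos z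
          - 15 * k ^ 2 * (Real.cos z) ^ 2 = 0) →
      c₁ = 0 ∧ ∀ z : ℝ, h z = cdgskH2 k z) := by
  refine ⟨⟨cdgskH2_even k, cdgskH2_periodic k, cdgskH2_ode hk.ne'⟩, ?_⟩
  intro c₁ h hh heven hper horth hode
  set g := h - cdgskH2 k with hg_def
  have hg : ContDiff ℝ 4 g := hh.sub (contDiff_cdgskH2 k)
  have hgT : Periodic g (2 * π) := hper.sub (cdgskH2_periodic k)
  have hg_even : g.Even := fun z => by simp only [hg_def, Pi.sub_apply, heven z, cdgskH2_even k z]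
  have hg_ode (z : ℝ) : iteratedDeriv 4 g z - g z = c₁ / k ^ 4 * cos z := by
    rw [div_mul_eq_mul_div, eq_div_iff (by positivity),
      iteratedDeriv_sub hh.contDiffAt (contDiff_cdgskH2 k).contDiffAt, hg_def, Pi.sub_apply]
    linear_combination hode z - k ^ 2 * cdgskH2_ode hk.ne' z
  have hc₁ : c₁ = 0 := by
    simpa [hk.ne'] using eq_zero_of_iteratedDeriv_four_sub_self_eq_mul_cos hg hgT hg_ode
  have hg_orth : ∫ z in 0..2 * π, g z * cos z = 0 := by
    simp_rw [hg_def, Pi.sub_apply, sub_mul]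
    rw [integral_sub (f := fun z => h z * cos z) (g := fun z => cdgskH2 k z * cos z)
      ((hh.continuous.mul continuous_cos).intervalIntegrable _ _)
      (((contDiff_cdgskH2 k (n := 0)).continuous.mul continuous_cos).intervalIntegrable _ _),
      horth, integral_cdgskH2_mul_cos, sub_zero]
  have hg_zero := eq_zero_of_iteratedDeriv_four_eq_self hg hg_even hgT hg_orth
    fun z => sub_eq_zero.1 (by simpa [hc₁] using hg_ode z)
  exact ⟨hc₁, fun z => sub_eq_zero.1 (congrFun hg_zero z)⟩
end

section
/- Let n, m ∈ ℤ satisfy n(1 − n⁴) = m(1 − m⁴). Then either n = m, or both n and m belong to {−1, 0, 1}. Consequently, at Floquet exponent ξ = 0 the only collision among the eigenvalues i ω_{n,0} = i k⁴ n(1 − n⁴) of the unperturbed Bloch operator is the triple collision ω_{1,0} = ω_{−1,0} = ω_{0,0} = 0. -/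
/-!
Factor `n(1 - n⁴) - m(1 - m⁴) = (n - m)(1 - S)` with `S = n⁴ + n³m + n²m² + nm³ + m⁴`.
Off the diagonal a collision forces `S = 1`, and since
`4S = (n + m)⁴ + 2(n² - m²)² + (n² + m²)²` this gives `n² + m² ≤ 2`,
which for integers leaves only `n, m ∈ {-1, 0, 1}`.
-/

theorem mul_one_sub_pow_four_sub_mul_one_sub_pow_four {R : Type*} [CommRing R] (a b : R) :
    a * (1 - a ^ 4) - b * (1 - b ^ 4) =
      (a - b) * (1 - (a ^ 4 + a ^ 3 * b + a ^ 2 * b ^ 2 + a * b ^ 3 + b ^ 4)) := by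
  ring

theorem sq_add_sq_sq_le_four_mul {R : Type*} [CommRing R] [LinearOrder R] [IsStrictOrderedRing R]
    (a b : R) :
    (a ^ 2 + b ^ 2) ^ 2 ≤ 4 * (a ^ 4 + a ^ 3 * b + a ^ 2 * b ^ 2 + a * b ^ 3 + b ^ 4) := by
  have hsos : 4 * (a ^ 4 + a ^ 3 * b + a ^ 2 * b ^ 2 + a * b ^ 3 + b ^ 4) =
      (a + b) ^ 4 + 2 * (a ^ 2 - b ^ 2) ^ 2 + (a ^ 2 + b ^ 2) ^ 2 := by
    ring
  rw [hsos]
  exact le_add_of_nonneg_left (by positivity)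

theorem Int.mem_neg_one_zero_one_of_sq_le_two {n : ℤ} (h : n ^ 2 ≤ 2) :
    n ∈ ({-1, 0, 1} : Set ℤ) := by
  obtain ⟨hlo, hhi⟩ := abs_le.mp (show |n| ≤ 1 by nlinarith [sq_abs n, abs_nonneg n])
  simp only [Set.mem_insert_iff, Set.mem_singleton_iff]
  omega

/-- **Collisions of Bloch eigenvalues at `ξ = 0`.**
If integers `n, m` satisfy `n(1 − n⁴) = m(1 − m⁴)`, then either `n = m` or both `n` and
`m` belong to `{−1, 0, 1}`.  Consequently, at Floquet exponent `ξ = 0` the only collision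
among the eigenvalues `i k⁴ n (1 − n⁴)` of the unperturbed Bloch operator is the triple
collision `ω_{1,0} = ω_{−1,0} = ω_{0,0} = 0`. -/
theorem cdgsk_eigenvalue_collision_xi_zero (n m : ℤ)
    (h : n * (1 - n ^ 4) = m * (1 - m ^ 4)) :
    n = m ∨ (n ∈ ({-1, 0, 1} : Set ℤ) ∧ m ∈ ({-1, 0, 1} : Set ℤ)) := by
  refine or_iff_not_imp_left.2 fun hnm => ?_
  have hS : n ^ 4 + n ^ 3 * m + n ^ 2 * m ^ 2 + n * m ^ 3 + m ^ 4 = 1 := by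
    have hfac := mul_one_sub_pow_four_sub_mul_one_sub_pow_four n m
    rw [h, sub_self, eq_comm, mul_eq_zero, sub_eq_zero, sub_eq_zero] at hfac
    exact (hfac.resolve_left hnm).symm
  have hbound : n ^ 2 + m ^ 2 ≤ 2 := by
    have := sq_add_sq_sq_le_four_mul n m
    rw [hS] at this
    nlinarith [sq_nonneg n, sq_nonneg m]
  exact ⟨Int.mem_neg_one_zero_one_of_sq_le_two (by nlinarith [sq_nonneg m]),
    Int.mem_neg_one_zero_one_of_sq_le_two (by nlinarith [sq_nonneg n])⟩
end

section
/- Let k > 0 and ξ ∈ (−1/2, 1/2] with ξ ≠ 0. Then for all integers n ≠ m, ω_{n,ξ} ≠ ω_{m,ξ}, i.e. k⁴ (n+ξ)(1 − (n+ξ)⁴) ≠ k⁴ (m+ξ)(1 − (m+ξ)⁴). Hence for nonzero Floquet exponent the eigenvalues i ω_{n,ξ} of the unperturbed Bloch operator are pairwise distinct. -/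
/-!
Write `x = n + ξ`, `y = m + ξ`. If `x - x⁵ = y - y⁵` with `x ≠ y`, dividing by `x - y` and passing to
`s = x + y`, `d = x - y` gives `5 s⁴ + 10 s² d² + d⁴ = 16`. Here `d = n - m` is a nonzero integer, so
`d² ∈ {1, 4}`, which forces `s² = 1` or `s = 0` respectively; in both cases `x = (s + d)/2` is a root
of `x³ - x`, hence an integer. Then `ξ = x - n` is an integer in `(-1/2, 1/2]`, i.e. `ξ = 0`.
-/

lemma quartic_eq_sixteen_of_sub_pow_five_eq {R : Type*} [CommRing R] [IsDomain R] {x y : R}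
    (h : x - x ^ 5 = y - y ^ 5) (hxy : x ≠ y) :
    5 * (x + y) ^ 4 + 10 * (x + y) ^ 2 * (x - y) ^ 2 + (x - y) ^ 4 = 16 := by
  have hfactor : (x - y) * (16 - (5 * (x + y) ^ 4 + 10 * (x + y) ^ 2 * (x - y) ^ 2 + (x - y) ^ 4))
      = 0 := by
    linear_combination 16 * h
  rcases mul_eq_zero.mp hfactor with hd | hq
  · exact absurd (sub_eq_zero.mp hd) hxy
  · exact (sub_eq_zero.mp hq).symm

lemma pow_three_eq_self_of_sub_pow_five_eq {x y : ℝ} (h : x - x ^ 5 = y - y ^ 5) {j : ℤ}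
    (hj : x - y = j) (hj0 : j ≠ 0) : x ^ 3 = x := by
  have hq := quartic_eq_sixteen_of_sub_pow_five_eq h (sub_ne_zero.mp (hj ▸ Int.cast_ne_zero.mpr hj0))
  set s := x + y
  set d := x - y
  have hx : x = (s + d) / 2 := by ring
  have hd_le : (j : ℝ) ^ 2 ≤ 4 := by
    rw [← hj]
    nlinarith [sq_nonneg (s ^ 2), sq_nonneg (s * d), sq_nonneg (d ^ 2 + 4)]
  have hj_cases : j ^ 2 = 1 ∨ j ^ 2 = 4 := by
    have : j ^ 2 ≤ 4 := by exact_mod_cast hd_le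
    have : -2 ≤ j ∧ j ≤ 2 := ⟨by nlinarith, by nlinarith⟩
    rcases this with ⟨h₁, h₂⟩
    interval_cases j <;> simp_all
  rcases hj_cases with hj1 | hj4
  · have hd2 : d ^ 2 = 1 := by rw [hj]; exact_mod_cast hj1
    -- `(s² - 1)(s² + 3) = 0`
    have hs2 : s ^ 2 = 1 := by nlinarith [sq_nonneg s]
    rw [hx]
    linear_combination (3 * d + s) / 8 * hs2 + (3 * s + d) / 8 * hd2
  · have hd2 : d ^ 2 = 4 := by rw [hj]; exact_mod_cast hj4
    -- `s² (s² + 8) = 0`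
    have hs : s = 0 := by nlinarith [sq_nonneg s, sq_nonneg (s ^ 2)]
    rw [hx, hs]
    linear_combination d / 8 * hd2

lemma exists_intCast_eq_of_pow_three_eq_self {x : ℝ} (h : x ^ 3 = x) : ∃ c : ℤ, x = c := by
  have : x * ((x - 1) * (x + 1)) = 0 := by linear_combination h
  rcases mul_eq_zero.mp this with h0 | h1
  · exact ⟨0, by simpa using h0⟩
  rcases mul_eq_zero.mp h1 with h1 | h1
  · exact ⟨1, by simpa using sub_eq_zero.mp h1⟩
  · exact ⟨-1, by push_cast; linarith⟩

lemma intCast_eq_zero_of_abs_lt_one {c : ℤ} (h : |(c : ℝ)| < 1) : (c : ℝ) = 0 := by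
  rw [Int.cast_eq_zero, ← Int.abs_lt_one_iff]
  exact_mod_cast h

/-- **No collisions of Bloch eigenvalues at nonzero Floquet exponent.**
Let `k > 0` and `ξ ∈ (−1/2, 1/2]` with `ξ ≠ 0`. Then for all integers `n ≠ m`,
`ω_{n,ξ} ≠ ω_{m,ξ}`, i.e. `k⁴ (n+ξ)(1 − (n+ξ)⁴) ≠ k⁴ (m+ξ)(1 − (m+ξ)⁴)`.
Hence for nonzero Floquet exponent the eigenvalues `i ω_{n,ξ}` of the unperturbed
Bloch operator are pairwise distinct. -/
theorem cdgsk_no_collision_nonzero_xi (k : ℝ) (hk : 0 < k) (ξ : ℝ)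
    (hξ : ξ ∈ Set.Ioc (-(1 / 2) : ℝ) (1 / 2)) (hξ0 : ξ ≠ 0)
    (n m : ℤ) (hnm : n ≠ m) :
    k ^ 4 * ((n : ℝ) + ξ) * (1 - ((n : ℝ) + ξ) ^ 4)
      ≠ k ^ 4 * ((m : ℝ) + ξ) * (1 - ((m : ℝ) + ξ) ^ 4) := by
  intro h
  have hcollide : (n + ξ) - (n + ξ) ^ 5 = (m + ξ) - (m + ξ) ^ 5 := by
    refine mul_left_cancel₀ (pow_pos hk 4).ne' ?_
    linear_combination h
  obtain ⟨c, hc⟩ := exists_intCast_eq_of_pow_three_eq_self <|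
    pow_three_eq_self_of_sub_pow_five_eq hcollide (j := n - m) (by push_cast; ring)
      (sub_ne_zero.mpr hnm)
  have hξc : ξ = ((c - n : ℤ) : ℝ) := by push_cast; linarith
  refine hξ0 (hξc ▸ intCast_eq_zero_of_abs_lt_one ?_)
  rw [← hξc, abs_lt]
  constructor <;> linarith [hξ.1, hξ.2]
end

section
/- Let k > 0. There exists ε > 0 such that for all a, ξ ∈ ℝ with 0 < a² + ξ² < ε², the quantity 108 a⁶ − 3231 a⁴ k⁴ + 48 a² k⁸ + 432 a⁴ k⁴ ξ² − 1488 a² k⁸ ξ² + 16 k¹² ξ² + 576 a² k⁸ ξ⁴ − 128 k¹² ξ⁴ + 256 k¹² ξ⁶ is strictly positive. Consequently the discriminant 15625 k¹² ξ⁶ · (that quantity) of the cubic Q(μ; a, ξ, k) is nonnegative for all sufficiently small a and ξ. -/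
/-!
Write `s = a²`, `t = ξ²`, `K = k⁴`. The factor is then a cubic polynomial in `s, t` whose
lowest-order part is `16 K² (3 s + K t)`. Each of its negative monomials `s² K`, `s K² t`,
`K³ t²` is dominated by a multiple of `s K²` or `K³ t` once `s ≤ K / 200` and `t ≤ 1 / 200`,
and with these thresholds the factor stays above half of its lowest-order part, which is
positive for `(a, ξ) ≠ 0`.
-/

def discriminantFactor (s t K : ℝ) : ℝ :=
  108 * s ^ 3 - 3231 * s ^ 2 * K + 48 * s * K ^ 2 + 432 * s ^ 2 * K * t - 1488 * s * K ^ 2 * t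
    + 16 * K ^ 3 * t + 576 * s * K ^ 2 * t ^ 2 - 128 * K ^ 3 * t ^ 2 + 256 * K ^ 3 * t ^ 3

theorem discriminantFactor_sq_sq_pow_four (a ξ k : ℝ) :
    108 * a ^ 6 - 3231 * a ^ 4 * k ^ 4 + 48 * a ^ 2 * k ^ 8
        + 432 * a ^ 4 * k ^ 4 * ξ ^ 2 - 1488 * a ^ 2 * k ^ 8 * ξ ^ 2
        + 16 * k ^ 12 * ξ ^ 2 + 576 * a ^ 2 * k ^ 8 * ξ ^ 4
        - 128 * k ^ 12 * ξ ^ 4 + 256 * k ^ 12 * ξ ^ 6 =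
      discriminantFactor (a ^ 2) (ξ ^ 2) (k ^ 4) := by
  unfold discriminantFactor
  ring

section

variable {s t K : ℝ}

theorem half_leading_le_discriminantFactor (hs : 0 ≤ s) (ht : 0 ≤ t) (hK : 0 ≤ K)
    (hsK : s ≤ K / 200) (ht' : t ≤ 1 / 200) :
    8 * K ^ 2 * (3 * s + K * t) ≤ discriminantFactor s t K := by
  have hs₂ : 3231 * s ^ 2 * K ≤ 3231 / 200 * s * K ^ 2 := by
    nlinarith [mul_nonneg (mul_nonneg hs hK) (sub_nonneg.mpr hsK)]
  have hst : 1488 * s * K ^ 2 * t ≤ 1488 / 200 * s * K ^ 2 := by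
    nlinarith [mul_nonneg (mul_nonneg hs (sq_nonneg K)) (sub_nonneg.mpr ht')]
  have ht₂ : 128 * K ^ 3 * t ^ 2 ≤ 128 / 200 * K ^ 3 * t := by
    nlinarith [mul_nonneg (mul_nonneg (pow_nonneg hK 3) ht) (sub_nonneg.mpr ht')]
  unfold discriminantFactor
  nlinarith [pow_nonneg hs 3, mul_nonneg (mul_nonneg (sq_nonneg s) hK) ht,
    mul_nonneg (mul_nonneg hs (sq_nonneg K)) (sq_nonneg t),
    mul_nonneg (pow_nonneg hK 3) (pow_nonneg ht 3)]

theorem discriminantFactor_pos (hs : 0 ≤ s) (ht : 0 ≤ t) (hK : 0 < K) (hst : 0 < s + t)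
    (hsK : s ≤ K / 200) (ht' : t ≤ 1 / 200) :
    0 < discriminantFactor s t K := by
  have hlead : 0 < 3 * s + K * t := by
    rcases ht.eq_or_lt with rfl | ht₀
    · linarith
    · nlinarith [mul_pos hK ht₀]
  calc 0 < 8 * K ^ 2 * (3 * s + K * t) := by positivity
    _ ≤ discriminantFactor s t K := half_leading_le_discriminantFactor hs ht hK.le hsK ht'

end

/-- **Positivity of the discriminant factor for small `a, ξ`.**
For `k > 0` there is `ε > 0` such that for all real `a, ξ` with `0 < a² + ξ² < ε²`, the
quantity
`108a⁶ − 3231a⁴k⁴ + 48a²k⁸ + 432a⁴k⁴ξ² − 1488a²k⁸ξ² + 16k¹²ξ² + 576a²k⁸ξ⁴ − 128k¹²ξ⁴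
  + 256k¹²ξ⁶`
is strictly positive.  Consequently the discriminant `15625 k¹² ξ⁶ ·(that quantity)` of
the cubic `Q(μ; a, ξ, k)` is nonnegative for all sufficiently small `a` and `ξ`. -/
theorem cdgsk_discriminant_positive (k : ℝ) (hk : 0 < k) :
    ∃ ε > (0 : ℝ), ∀ a ξ : ℝ, 0 < a ^ 2 + ξ ^ 2 → a ^ 2 + ξ ^ 2 < ε ^ 2 →
      (0 < 108 * a ^ 6 - 3231 * a ^ 4 * k ^ 4 + 48 * a ^ 2 * k ^ 8
          + 432 * a ^ 4 * k ^ 4 * ξ ^ 2 - 1488 * a ^ 2 * k ^ 8 * ξ ^ 2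
          + 16 * k ^ 12 * ξ ^ 2 + 576 * a ^ 2 * k ^ 8 * ξ ^ 4
          - 128 * k ^ 12 * ξ ^ 4 + 256 * k ^ 12 * ξ ^ 6) ∧
      0 ≤ 15625 * k ^ 12 * ξ ^ 6 *
          (108 * a ^ 6 - 3231 * a ^ 4 * k ^ 4 + 48 * a ^ 2 * k ^ 8
            + 432 * a ^ 4 * k ^ 4 * ξ ^ 2 - 1488 * a ^ 2 * k ^ 8 * ξ ^ 2
            + 16 * k ^ 12 * ξ ^ 2 + 576 * a ^ 2 * k ^ 8 * ξ ^ 4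
            - 128 * k ^ 12 * ξ ^ 4 + 256 * k ^ 12 * ξ ^ 6) := by
  set m := min (k ^ 2) 1
  have hm : 0 < m := lt_min (by positivity) one_pos
  have hmk : m ^ 2 ≤ k ^ 4 := by nlinarith [min_le_left (k ^ 2) 1]
  have hm1 : m ^ 2 ≤ 1 := by nlinarith [min_le_right (k ^ 2) 1]
  refine ⟨m / 15, by positivity, fun a ξ hpos hlt => ?_⟩
  have hsmall : a ^ 2 + ξ ^ 2 < m ^ 2 / 225 := by linarith [div_pow m 15 2]
  have hD : 0 < discriminantFactor (a ^ 2) (ξ ^ 2) (k ^ 4) :=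
    discriminantFactor_pos (sq_nonneg a) (sq_nonneg ξ) (by positivity) hpos
      (by nlinarith [sq_nonneg ξ]) (by nlinarith [sq_nonneg a])
  rw [discriminantFactor_sq_sq_pow_four]
  exact ⟨hD, mul_nonneg (by positivity) hD.le⟩
end

section
/- Let k > 0. There exists ε > 0 such that for all a, ξ ∈ ℝ with |a| < ε and |ξ| < ε, every complex root λ of the polynomial P(λ) := −λ³ − 7 i k⁴ ξ λ² − (75 a² k⁴ ξ² − 8 k⁸ ξ² + 100 k⁸ ξ⁴) λ + (1200 i a² k⁸ ξ³ − 16 i k¹² ξ³ + 100 i k¹² ξ⁵) satisfies Re(λ) = 0. Equivalently, for |a| and |ξ| sufficiently small, all three eigenvalues of the reduced 3×3 spectral matrix of the linearized CDG–SK equation are purely imaginary, which yields the spectral stability of the small-amplitude periodic traveling waves at leading order. -/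
/-!
Write `λ = i k⁴ξ w` and `a = t k²`. Then `P(λ) = i (k⁴ξ)³ q(w)` with the real monic cubic
`q(w) = w³ + 7w² + (8 - 75t² - 100ξ²) w + (1200t² - 16 + 100ξ²)`, which is `(w - 1)(w + 4)²` at
`t = ξ = 0`. For small `t, ξ` with `ξ ≠ 0` the double root splits:
`q(-4) = 1500t² + 500ξ² > 0 > 1275t² + 200ξ² - 18 = q(-1)`. A real monic cubic positive at a
point left of one where it is negative has three real roots: a non-real root `z` would give
`q(x) = (x - r)|x - z|²` on `ℝ` with `r` real, whose sign changes only once, from `-` to `+`.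
So `w` is real and `λ` is imaginary; for `ξ = 0`, `P(λ) = -λ³` forces `λ = 0`.
-/

open Complex

theorem cubic_eq_mul_normSq_sub_of_root {b c d : ℝ} {z : ℂ}
    (hz : z ^ 3 + b * z ^ 2 + c * z + d = 0) (him : z.im ≠ 0) (x : ℝ) :
    x ^ 3 + b * x ^ 2 + c * x + d = (x + b + 2 * z.re) * normSq (x - z) := by
  have hz_re := congrArg re hz
  have hz_im := congrArg im hz
  simp only [pow_succ, pow_zero, one_mul, add_re, add_im, mul_re, mul_im, ofReal_re,
    ofReal_im, zero_re, zero_im] at hz_re hz_im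
  have hc : c = z.im ^ 2 - 3 * z.re ^ 2 - 2 * b * z.re :=
    mul_left_cancel₀ him (by linear_combination hz_im)
  rw [normSq_apply, sub_re, sub_im, ofReal_re, ofReal_im]
  linear_combination hz_re + (x - z.re) * hc

theorem im_eq_zero_of_cubic_root_of_sign_change {b c d x₁ x₂ : ℝ} (hx : x₁ < x₂)
    (h₁ : 0 < x₁ ^ 3 + b * x₁ ^ 2 + c * x₁ + d) (h₂ : x₂ ^ 3 + b * x₂ ^ 2 + c * x₂ + d < 0)
    {z : ℂ} (hz : z ^ 3 + b * z ^ 2 + c * z + d = 0) : z.im = 0 := by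
  by_contra him
  have hnonneg (x : ℝ) : 0 ≤ normSq (x - z) := normSq_nonneg _
  rw [cubic_eq_mul_normSq_sub_of_root hz him] at h₁ h₂
  linarith [pos_of_mul_pos_left h₁ (hnonneg x₁), neg_of_mul_neg_left h₂ (hnonneg x₂)]

def cdgskCharpoly (a ξ k : ℝ) (lam : ℂ) : ℂ :=
  -lam ^ 3 - 7 * I * (k : ℂ) ^ 4 * (ξ : ℂ) * lam ^ 2
    - (75 * (a : ℂ) ^ 2 * (k : ℂ) ^ 4 * (ξ : ℂ) ^ 2
        - 8 * (k : ℂ) ^ 8 * (ξ : ℂ) ^ 2 + 100 * (k : ℂ) ^ 8 * (ξ : ℂ) ^ 4) * lam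
    + (1200 * I * (a : ℂ) ^ 2 * (k : ℂ) ^ 8 * (ξ : ℂ) ^ 3
        - 16 * I * (k : ℂ) ^ 12 * (ξ : ℂ) ^ 3
        + 100 * I * (k : ℂ) ^ 12 * (ξ : ℂ) ^ 5)

theorem cdgskCharpoly_I_mul (t ξ k : ℝ) (w : ℂ) :
    cdgskCharpoly (t * k ^ 2) ξ k (I * (k ^ 4 * ξ : ℝ) * w) =
      I * (k ^ 4 * ξ : ℝ) ^ 3 * (w ^ 3 + (7 : ℝ) * w ^ 2
        + (8 - 75 * t ^ 2 - 100 * ξ ^ 2 : ℝ) * w + (1200 * t ^ 2 - 16 + 100 * ξ ^ 2 : ℝ)) := by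
  unfold cdgskCharpoly
  push_cast
  linear_combination (-(k : ℂ) ^ 12 * ξ ^ 3 * (7 * w ^ 2 + w ^ 3)) * I_pow_three

/-- **Spectral stability at leading order: the reduced eigenvalues are purely imaginary.**
Let `k > 0`.  There exists `ε > 0` such that for all real `a, ξ` with `|a| < ε` and
`|ξ| < ε`, every complex root `λ` of the characteristic polynomial
`P(λ) = −λ³ − 7ik⁴ξ λ² − (75a²k⁴ξ² − 8k⁸ξ² + 100k⁸ξ⁴) λ
  + (1200i a²k⁸ξ³ − 16i k¹²ξ³ + 100i k¹²ξ⁵)`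
of the reduced 3×3 spectral matrix of the linearized CDG–SK equation satisfies
`Re λ = 0`. -/
theorem cdgsk_spectral_stability_reduced (k : ℝ) (hk : 0 < k) :
    ∃ ε > (0 : ℝ), ∀ a ξ : ℝ, |a| < ε → |ξ| < ε →
      ∀ lam : ℂ,
        (-lam ^ 3 - 7 * Complex.I * (k : ℂ) ^ 4 * (ξ : ℂ) * lam ^ 2
            - (75 * (a : ℂ) ^ 2 * (k : ℂ) ^ 4 * (ξ : ℂ) ^ 2
                - 8 * (k : ℂ) ^ 8 * (ξ : ℂ) ^ 2 + 100 * (k : ℂ) ^ 8 * (ξ : ℂ) ^ 4) * lam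
            + (1200 * Complex.I * (a : ℂ) ^ 2 * (k : ℂ) ^ 8 * (ξ : ℂ) ^ 3
                - 16 * Complex.I * (k : ℂ) ^ 12 * (ξ : ℂ) ^ 3
                + 100 * Complex.I * (k : ℂ) ^ 12 * (ξ : ℂ) ^ 5) = 0) →
        lam.re = 0 := by
  refine ⟨min (k ^ 2) 1 / 10, by positivity, fun a ξ ha hξ lam hP => ?_⟩
  change cdgskCharpoly a ξ k lam = 0 at hP
  obtain rfl | hξ0 := eq_or_ne ξ 0
  · simp [cdgskCharpoly] at hP
    simp [hP]
  have hs : ((k ^ 4 * ξ : ℝ) : ℂ) ≠ 0 := ofReal_ne_zero.2 (by positivity)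
  obtain ⟨t, rfl⟩ : ∃ t, a = t * k ^ 2 := ⟨a / k ^ 2, by field_simp⟩
  obtain ⟨w, rfl⟩ : ∃ w : ℂ, lam = I * (k ^ 4 * ξ : ℝ) * w :=
    ⟨lam / (I * (k ^ 4 * ξ : ℝ)), by field_simp⟩
  rw [cdgskCharpoly_I_mul] at hP
  have hw := (mul_eq_zero.1 hP).resolve_left (by simpa using hs)
  have ht : |t| < 1 / 10 := by
    rw [abs_mul, abs_of_pos (by positivity : 0 < k ^ 2)] at ha
    nlinarith [min_le_left (k ^ 2) 1]
  have hξ' : |ξ| < 1 / 10 := by linarith [min_le_right (k ^ 2) 1]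
  have him := im_eq_zero_of_cubic_root_of_sign_change (x₁ := -4) (x₂ := -1) (by norm_num)
    (by nlinarith [sq_pos_of_ne_zero hξ0, sq_nonneg t])
    (by nlinarith [sq_abs t, sq_abs ξ, abs_nonneg t, abs_nonneg ξ]) hw
  simp only [mul_re, I_re, I_im, ofReal_re, ofReal_im, him]
  ring
end
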